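/- The element 4 + 3·3^{1/3} + 2·3^{2/3} of the ring ℤ[3^{1/3}] is the fundamental unit of the cubic field ℚ(3^{1/3}): it is a unit of the ring of integers ℤ[3^{1/3}], it is greater than 1, and it generates the unit group of ℤ[3^{1/3}] modulo the torsion subgroup {±1}. -/

import Mathlib

/-!
A unit `u > 1` of `ℤ[∛P]` has norm `u · |u'|² = 1`, where `u'` is a complex conjugate, so
`|u'| < 1`. Writing each coordinate of `u` as an average of `u` and its two conjugates pins
`3x`, `3y∛P` and `3z∛P²` to within `2` of `u`. For `P = 3` and `1 < u < 13` this leaves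
finitely many coordinate triples, and the only one of norm `1` is that of `ε = 4 + 3∛3 + 2∛9`.
As `ε < 13`, no unit lies in `(1, ε)`, so every positive unit is a power of `ε`.
-/

/-- The real cube root of a natural number. -/
noncomputable def cbrt (P : ℕ) : ℝ := (P : ℝ) ^ ((1 : ℝ) / 3)

/-- `u` belongs to the order `ℤ[P^{1/3}]` of `ℚ(P^{1/3})`. -/
def InOrder (P : ℕ) (u : ℝ) : Prop :=
  ∃ x y z : ℤ, u = (x : ℝ) + (y : ℝ) * cbrt P + (z : ℝ) * (cbrt P) ^ 2

/-- `u` is a unit of the order `ℤ[P^{1/3}]`. -/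
def IsUnitOfOrder (P : ℕ) (u : ℝ) : Prop :=
  InOrder P u ∧ ∃ v : ℝ, InOrder P v ∧ u * v = 1

/-- `ε` is the fundamental unit of `ℚ(P^{1/3})` (whose ring of integers is `ℤ[P^{1/3}]`
since `P ≢ ±1 mod 9`): the smallest unit greater than `1`, equivalently the generator
greater than `1` of the unit group modulo `±1`. -/
def IsFundamentalUnit (P : ℕ) (ε : ℝ) : Prop :=
  IsUnitOfOrder P ε ∧ 1 < ε ∧ ∀ u : ℝ, IsUnitOfOrder P u → 1 < u → ε ≤ u

lemma cbrt_nonneg (P : ℕ) : 0 ≤ cbrt P := Real.rpow_nonneg (Nat.cast_nonneg P) _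

lemma cbrt_pow_three (P : ℕ) : cbrt P ^ 3 = P := by
  rw [cbrt, ← Real.rpow_natCast, ← Real.rpow_mul (Nat.cast_nonneg P)]
  norm_num

section PureCubic

variable {P : ℕ}

/-- The norm `N(x + y∛P + z∛P²)`. -/
def normForm (P : ℕ) (x y z : ℤ) : ℤ :=
  x ^ 3 + P * y ^ 3 + P ^ 2 * z ^ 3 - 3 * P * x * y * z

/-- The product of the two complex conjugates of `x + y∛P + z∛P²`. -/
noncomputable def adjugate (P : ℕ) (x y z : ℝ) : ℝ :=
  (x ^ 2 - P * y * z) + (P * z ^ 2 - x * y) * cbrt P + (y ^ 2 - x * z) * cbrt P ^ 2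

lemma mul_adjugate (x y z : ℤ) :
    ((x : ℝ) + y * cbrt P + z * cbrt P ^ 2) * adjugate P x y z = normForm P x y z := by
  unfold adjugate normForm
  push_cast
  linear_combination ((y ^ 3 + P * z ^ 3 - 2 * x * y * z : ℝ) + (y ^ 2 * z - x * z ^ 2) * cbrt P) *
    cbrt_pow_three P

lemma adjugate_eq (x y z : ℝ) :
    adjugate P x y z = (x - (y * cbrt P + z * cbrt P ^ 2) / 2) ^ 2
      + 3 / 4 * (y * cbrt P - z * cbrt P ^ 2) ^ 2 := by
  unfold adjugate
  linear_combination (y * z - z ^ 2 * cbrt P) * cbrt_pow_three P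

lemma adjugate_nonneg (x y z : ℝ) : 0 ≤ adjugate P x y z := by
  rw [adjugate_eq]
  positivity

lemma normForm_mul (x y z a b c : ℤ) :
    normForm P x y z * normForm P a b c =
      normForm P (x * a + P * (y * c + z * b)) (x * b + y * a + P * z * c)
        (x * c + y * b + z * a) := by
  unfold normForm
  ring

lemma coords_mul (x y z a b c : ℝ) :
    (x + y * cbrt P + z * cbrt P ^ 2) * (a + b * cbrt P + c * cbrt P ^ 2) =
      (x * a + P * (y * c + z * b)) + (x * b + y * a + P * z * c) * cbrt P
        + (x * c + y * b + z * a) * cbrt P ^ 2 := by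
  linear_combination (y * c + z * b + z * c * cbrt P) * cbrt_pow_three P

lemma dvd_of_normForm_eq_zero (hP : P.Prime) {a b c : ℤ} (h : normForm P a b c = 0) :
    (P : ℤ) ∣ a ∧ (P : ℤ) ∣ b ∧ (P : ℤ) ∣ c := by
  have hP' : Prime (P : ℤ) := Nat.prime_iff_prime_int.mp hP
  have hP0 : (P : ℤ) ≠ 0 := hP'.ne_zero
  unfold normForm at h
  obtain ⟨a, rfl⟩ : (P : ℤ) ∣ a :=
    hP'.dvd_of_dvd_pow (n := 3) ⟨3 * a * b * c - b ^ 3 - P * c ^ 3, by linear_combination h⟩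
  obtain ⟨b, rfl⟩ : (P : ℤ) ∣ b :=
    hP'.dvd_of_dvd_pow (n := 3) ⟨3 * a * b * c - P * a ^ 3 - c ^ 3,
      mul_left_cancel₀ hP0 (by linear_combination h)⟩
  obtain ⟨c, rfl⟩ : (P : ℤ) ∣ c :=
    hP'.dvd_of_dvd_pow (n := 3) ⟨3 * a * b * c - a ^ 3 - P * b ^ 3,
      mul_left_cancel₀ (pow_ne_zero 2 hP0) (by linear_combination h)⟩
  exact ⟨dvd_mul_right _ _, dvd_mul_right _ _, dvd_mul_right _ _⟩

lemma pow_dvd_of_normForm_eq_zero (hP : P.Prime) (k : ℕ) :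
    ∀ {a b c : ℤ}, normForm P a b c = 0 →
      (P : ℤ) ^ k ∣ a ∧ (P : ℤ) ^ k ∣ b ∧ (P : ℤ) ^ k ∣ c := by
  induction k with
  | zero => simp
  | succ k ih =>
    intro a b c h
    obtain ⟨⟨a, rfl⟩, ⟨b, rfl⟩, ⟨c, rfl⟩⟩ := dvd_of_normForm_eq_zero hP h
    have hscale : normForm P (P * a) (P * b) (P * c) = (P : ℤ) ^ 3 * normForm P a b c := by
      unfold normForm
      ring
    rw [hscale] at h
    have hP3 : (P : ℤ) ^ 3 ≠ 0 := pow_ne_zero 3 (by exact_mod_cast hP.ne_zero)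
    obtain ⟨ha, hb, hc⟩ := ih ((mul_eq_zero.mp h).resolve_left hP3)
    rw [pow_succ']
    exact ⟨mul_dvd_mul_left _ ha, mul_dvd_mul_left _ hb, mul_dvd_mul_left _ hc⟩

lemma Int.eq_zero_of_forall_pow_dvd {p : ℕ} (hp : 1 < p) {a : ℤ}
    (h : ∀ k : ℕ, (p : ℤ) ^ k ∣ a) : a = 0 :=
  Int.eq_zero_of_dvd_of_natAbs_lt_natAbs (h a.natAbs)
    (by rw [Int.natAbs_pow, Int.natAbs_natCast]; exact Nat.lt_pow_self hp)

lemma normForm_eq_zero (hP : P.Prime) {a b c : ℤ} (h : normForm P a b c = 0) :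
    a = 0 ∧ b = 0 ∧ c = 0 :=
  ⟨Int.eq_zero_of_forall_pow_dvd hP.one_lt fun k ↦ (pow_dvd_of_normForm_eq_zero hP k h).1,
    Int.eq_zero_of_forall_pow_dvd hP.one_lt fun k ↦ (pow_dvd_of_normForm_eq_zero hP k h).2.1,
    Int.eq_zero_of_forall_pow_dvd hP.one_lt fun k ↦ (pow_dvd_of_normForm_eq_zero hP k h).2.2⟩

lemma coords_eq_zero (hP : P.Prime) {x y z : ℤ}
    (h : (x : ℝ) + y * cbrt P + z * cbrt P ^ 2 = 0) : x = 0 ∧ y = 0 ∧ z = 0 := by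
  refine normForm_eq_zero hP (Int.cast_injective (α := ℝ) ?_)
  rw [← mul_adjugate, h, zero_mul, Int.cast_zero]

end PureCubic

section Units

variable {P : ℕ} {u v : ℝ}

lemma InOrder.intCast (n : ℤ) : InOrder P n := ⟨n, 0, 0, by simp⟩

lemma InOrder.neg (hu : InOrder P u) : InOrder P (-u) := by
  obtain ⟨x, y, z, rfl⟩ := hu
  exact ⟨-x, -y, -z, by push_cast; ring⟩

lemma InOrder.mul (hu : InOrder P u) (hv : InOrder P v) : InOrder P (u * v) := by
  obtain ⟨x, y, z, rfl⟩ := hu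
  obtain ⟨a, b, c, rfl⟩ := hv
  exact ⟨x * a + P * (y * c + z * b), x * b + y * a + P * z * c, x * c + y * b + z * a,
    by rw [coords_mul]; push_cast; ring⟩

lemma IsUnitOfOrder.one : IsUnitOfOrder P 1 :=
  ⟨by exact_mod_cast InOrder.intCast 1, 1, by exact_mod_cast InOrder.intCast 1, mul_one 1⟩

lemma IsUnitOfOrder.ne_zero (hu : IsUnitOfOrder P u) : u ≠ 0 := by
  obtain ⟨-, v, -, huv⟩ := hu
  exact left_ne_zero_of_mul_eq_one huv

lemma IsUnitOfOrder.neg (hu : IsUnitOfOrder P u) : IsUnitOfOrder P (-u) := by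
  obtain ⟨hu, v, hv, huv⟩ := hu
  exact ⟨hu.neg, -v, hv.neg, by rw [neg_mul_neg, huv]⟩

lemma IsUnitOfOrder.mul (hu : IsUnitOfOrder P u) (hv : IsUnitOfOrder P v) :
    IsUnitOfOrder P (u * v) := by
  obtain ⟨hu, u', hu', huu'⟩ := hu
  obtain ⟨hv, v', hv', hvv'⟩ := hv
  exact ⟨hu.mul hv, u' * v', hu'.mul hv', by rw [mul_mul_mul_comm, huu', hvv', one_mul]⟩

lemma IsUnitOfOrder.inv (hu : IsUnitOfOrder P u) : IsUnitOfOrder P u⁻¹ := by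
  obtain ⟨hu, v, hv, huv⟩ := hu
  rw [← eq_inv_of_mul_eq_one_right huv]
  exact ⟨hv, u, hu, by rw [mul_comm, huv]⟩

lemma IsUnitOfOrder.pow (hu : IsUnitOfOrder P u) (n : ℕ) : IsUnitOfOrder P (u ^ n) := by
  induction n with
  | zero => simpa using IsUnitOfOrder.one
  | succ n ih => simpa [pow_succ] using ih.mul hu

lemma IsUnitOfOrder.zpow (hu : IsUnitOfOrder P u) (k : ℤ) : IsUnitOfOrder P (u ^ k) := by
  cases k with
  | ofNat n => simpa using hu.pow n
  | negSucc n => simpa [zpow_negSucc] using (hu.pow (n + 1)).inv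

lemma IsUnitOfOrder.isUnit_normForm (hP : P.Prime) (hu : IsUnitOfOrder P u) {x y z : ℤ}
    (hxyz : u = x + y * cbrt P + z * cbrt P ^ 2) : IsUnit (normForm P x y z) := by
  obtain ⟨-, v, ⟨a, b, c, rfl⟩, huv⟩ := hu
  rw [hxyz, coords_mul] at huv
  obtain ⟨h₀, h₁, h₂⟩ := coords_eq_zero hP (x := x * a + P * (y * c + z * b) - 1)
    (y := x * b + y * a + P * z * c) (z := x * c + y * b + z * a) (by push_cast; linarith)
  refine IsUnit.of_mul_eq_one (normForm P a b c) ?_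
  rw [normForm_mul, sub_eq_zero.mp h₀, h₁, h₂]
  simp [normForm]

lemma IsUnitOfOrder.normForm_eq_one (hP : P.Prime) (hu : IsUnitOfOrder P u) (hpos : 0 < u)
    {x y z : ℤ} (hxyz : u = x + y * cbrt P + z * cbrt P ^ 2) : normForm P x y z = 1 := by
  have hN : (0 : ℝ) ≤ normForm P x y z := by
    rw [← mul_adjugate, ← hxyz]
    exact mul_nonneg hpos.le (adjugate_nonneg _ _ _)
  rcases Int.isUnit_iff.mp (hu.isUnit_normForm hP hxyz) with h | h
  · exact h
  · rw [h] at hN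
    norm_num at hN

end Units

section Bounds

variable {P : ℕ} {u : ℝ}

lemma abs_three_mul_coords_sub_lt_two {x y z : ℤ} (hN : normForm P x y z = 1) (h1 : 1 < u)
    (hxyz : u = x + y * cbrt P + z * cbrt P ^ 2) :
    |3 * x - u| < 2 ∧ |3 * (y * cbrt P) - u| < 2 ∧ |3 * (z * cbrt P ^ 2) - u| < 2 := by
  set X := (x : ℝ) - (y * cbrt P + z * cbrt P ^ 2) / 2
  set D := (y : ℝ) * cbrt P - z * cbrt P ^ 2
  have hadj : X ^ 2 + 3 / 4 * D ^ 2 < 1 := by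
    have hprod : u * (X ^ 2 + 3 / 4 * D ^ 2) = 1 := by
      rw [hxyz, ← adjugate_eq, mul_adjugate, hN, Int.cast_one]
    have hA : 0 ≤ X ^ 2 + 3 / 4 * D ^ 2 := by positivity
    nlinarith
  have hX : 3 * x - u = 2 * X := by rw [hxyz]; ring
  have hY : 3 * (y * cbrt P) - u = -X + 3 / 2 * D := by rw [hxyz]; ring
  have hZ : 3 * (z * cbrt P ^ 2) - u = -X - 3 / 2 * D := by rw [hxyz]; ring
  refine ⟨?_, ?_, ?_⟩ <;> refine abs_lt_of_sq_lt_sq ?_ zero_le_two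
  · rw [hX]; nlinarith
  · rw [hY]; nlinarith [sq_nonneg (X + D / 2)]
  · rw [hZ]; nlinarith [sq_nonneg (X - D / 2)]

end Bounds

section FundamentalUnit

variable {P : ℕ} {ε u : ℝ}

lemma IsFundamentalUnit.exists_zpow_eq (hε : IsFundamentalUnit P ε) (hu : IsUnitOfOrder P u)
    (hpos : 0 < u) : ∃ k : ℤ, u = ε ^ k := by
  obtain ⟨hεunit, hε1, hεmin⟩ := hε
  obtain ⟨k, hk, hk'⟩ := exists_mem_Ico_zpow hpos hε1
  have hεk : 0 < ε ^ k := zpow_pos (one_pos.trans hε1) k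
  refine ⟨k, le_antisymm ?_ hk⟩
  by_contra! hlt
  have hw : IsUnitOfOrder P (u * ε ^ (-k)) := hu.mul (hεunit.zpow (-k))
  have hw1 : 1 < u * ε ^ (-k) := by
    rwa [zpow_neg, ← div_eq_mul_inv, one_lt_div hεk]
  have hwε : u * ε ^ (-k) < ε := by
    rwa [zpow_neg, ← div_eq_mul_inv, div_lt_iff₀ hεk, ← zpow_one_add₀ (one_pos.trans hε1).ne',
      add_comm]
  exact (hεmin _ hw hw1).not_gt hwε

lemma IsFundamentalUnit.exists_eq_zpow_or_eq_neg_zpow (hε : IsFundamentalUnit P ε)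
    (hu : IsUnitOfOrder P u) : ∃ k : ℤ, u = ε ^ k ∨ u = -ε ^ k := by
  rcases hu.ne_zero.lt_or_gt with hneg | hpos
  · obtain ⟨k, hk⟩ := hε.exists_zpow_eq hu.neg (neg_pos.mpr hneg)
    exact ⟨k, Or.inr (by rw [← hk, neg_neg])⟩
  · obtain ⟨k, hk⟩ := hε.exists_zpow_eq hu hpos
    exact ⟨k, Or.inl hk⟩

end FundamentalUnit

lemma one_four_lt_cbrt_three : 1.4 < cbrt 3 :=
  lt_of_pow_lt_pow_left₀ 3 (cbrt_nonneg 3) (by rw [cbrt_pow_three]; norm_num)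

lemma cbrt_three_lt_one_five : cbrt 3 < 1.5 :=
  lt_of_pow_lt_pow_left₀ 3 (by norm_num) (by rw [cbrt_pow_three]; norm_num)

lemma normForm_three_eq_one_of_bounds {x y z : ℤ} (hx : -1 < x ∧ x < 5) (hy : -1 < y ∧ y < 4)
    (hz : -1 < z ∧ z < 3) (hN : normForm 3 x y z = 1) :
    (x = 1 ∧ y = 0 ∧ z = 0) ∨ (x = 4 ∧ y = 3 ∧ z = 2) := by
  obtain ⟨hx, hx'⟩ := hx
  obtain ⟨hy, hy'⟩ := hy
  obtain ⟨hz, hz'⟩ := hz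
  unfold normForm at hN
  interval_cases x <;> interval_cases y <;> interval_cases z <;> omega

lemma IsUnitOfOrder.eq_of_one_lt_of_lt_thirteen {u : ℝ} (hu : IsUnitOfOrder 3 u) (h1 : 1 < u)
    (h13 : u < 13) : u = 4 + 3 * cbrt 3 + 2 * cbrt 3 ^ 2 := by
  obtain ⟨x, y, z, hxyz⟩ := hu.1
  have hN := hu.normForm_eq_one Nat.prime_three (one_pos.trans h1) hxyz
  obtain ⟨hx, hy, hz⟩ := abs_three_mul_coords_sub_lt_two hN h1 hxyz
  rw [abs_lt] at hx hy hz
  have ht := one_four_lt_cbrt_three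
  have ht2 : 1.96 < cbrt 3 ^ 2 := by nlinarith
  have hxb : (-1 : ℝ) < x ∧ (x : ℝ) < 5 := ⟨by linarith, by linarith⟩
  have hyb : (-1 : ℝ) < y ∧ (y : ℝ) < 4 := ⟨by nlinarith, by nlinarith⟩
  have hzb : (-1 : ℝ) < z ∧ (z : ℝ) < 3 := ⟨by nlinarith, by nlinarith⟩
  rcases normForm_three_eq_one_of_bounds (by exact_mod_cast hxb) (by exact_mod_cast hyb)
    (by exact_mod_cast hzb) hN with ⟨rfl, rfl, rfl⟩ | ⟨rfl, rfl, rfl⟩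
  · norm_num at hxyz
    linarith
  · rw [hxyz]
    push_cast
    ring

theorem isFundamentalUnit_three : IsFundamentalUnit 3 (4 + 3 * cbrt 3 + 2 * cbrt 3 ^ 2) := by
  have ht := one_four_lt_cbrt_three
  have ht' := cbrt_three_lt_one_five
  have hunit : IsUnitOfOrder 3 (4 + 3 * cbrt 3 + 2 * cbrt 3 ^ 2) :=
    ⟨⟨4, 3, 2, by push_cast; ring⟩, -2 + cbrt 3 ^ 2, ⟨-2, 0, 1, by push_cast; ring⟩,
      by linear_combination (3 + 2 * cbrt 3) * cbrt_pow_three 3⟩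
  refine ⟨hunit, by nlinarith, fun u hu h1 ↦ ?_⟩
  by_cases h13 : u < 13
  · exact (hu.eq_of_one_lt_of_lt_thirteen h1 h13).ge
  · nlinarith

/-- `4 + 3·3^{1/3} + 2·3^{2/3}` is the fundamental unit of `ℚ(3^{1/3})`: it is a unit of
the ring of integers `ℤ[3^{1/3}]`, it is greater than `1`, and every unit of
`ℤ[3^{1/3}]` is of the form `± ε^k` with `k ∈ ℤ`. -/
theorem fundamental_unit_three :
    IsUnitOfOrder 3 (4 + 3 * cbrt 3 + 2 * (cbrt 3) ^ 2) ∧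
    1 < 4 + 3 * cbrt 3 + 2 * (cbrt 3) ^ 2 ∧
    ∀ u : ℝ, IsUnitOfOrder 3 u →
      ∃ k : ℤ, u = (4 + 3 * cbrt 3 + 2 * (cbrt 3) ^ 2) ^ k ∨
        u = -(4 + 3 * cbrt 3 + 2 * (cbrt 3) ^ 2) ^ k :=
  ⟨isFundamentalUnit_three.1, isFundamentalUnit_three.2.1,
    fun _ hu ↦ isFundamentalUnit_three.exists_eq_zpow_or_eq_neg_zpow hu⟩
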